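/- Let Ω be a locally compact Hausdorff space with countable base, G a quasi-metric kernel on Ω with quasi-metric constant κ, 0 < q < 1, and ν, σ locally finite Radon measures on Ω. Then for all x ∈ Ω, G[(Gν)^q dσ](x) ≤ (2κ)^q (Gν(x))^q [Gσ(x) + (Kσ(x))^{1−q}]. -/

import Mathlib

/-!
Fix `x` and put `c = 2κ`. Split `Gν(y)` into the part carried by the points `z` with
`G(y,z) > G(x,y)` and the rest; by the quasi-triangle inequality the rest is at most
`c Gν(x)`, and subadditivity of `t ↦ t^q` bounds `G[(Gν)^q dσ](x)` by `(c Gν(x))^q Gσ(x)` plus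
`∫ G(x,y) (near part)^q dσ(y)`. Writing `G(x,y) = ∫_0^∞ 1{y ∈ B(x,r)} dr/r²`, the latter
is `∫_0^∞ (∫_{B(x,r)} (near part)^q dσ) dr/r²`. For `y ∈ B(x,r)` the near part is dominated by
`G(ν|B(x,cr))(y)`, so the inner integral is at most `ϰ(B(x,r))^q ν(B(x,cr))^q`. Hölder's
inequality in `r` with exponents `1/(1-q)` and `1/q` gives `Kσ(x)^{1-q}` times
`(∫_0^∞ ν(B(x,cr)) dr/r²)^q = (c Gν(x))^q`.
-/

open MeasureTheory ENNReal Set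

noncomputable section

namespace NPE

variable {Ω : Type*} [TopologicalSpace Ω] [MeasurableSpace Ω]

/-- The potential `Gμ(x) = ∫_Ω G(x,y) dμ(y)`. -/
def pot (G : Ω → Ω → ℝ≥0∞) (μ : Measure Ω) (x : Ω) : ℝ≥0∞ :=
  ∫⁻ y, G x y ∂μ

/-- The potential `G(f dσ)(x) = ∫_Ω G(x,y) f(y) dσ(y)`. -/
def potF (G : Ω → Ω → ℝ≥0∞) (σ : Measure Ω) (f : Ω → ℝ≥0∞) (x : Ω) : ℝ≥0∞ :=
  ∫⁻ y, G x y * f y ∂σ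

/-- A kernel on `Ω` is a lower semicontinuous function `Ω × Ω → [0,∞]`. -/
def IsKernel (G : Ω → Ω → ℝ≥0∞) : Prop :=
  LowerSemicontinuous (fun p : Ω × Ω => G p.1 p.2)

/-- A quasi-metric kernel with quasi-metric constant `κ ≥ 1/2`: positive, symmetric and
`d := 1/G` satisfies the quasi-triangle inequality. -/
def IsQuasiMetricKernel (G : Ω → Ω → ℝ≥0∞) (κ : ℝ) : Prop :=
  IsKernel G ∧ (1 / 2 : ℝ) ≤ κ ∧ (∀ x y, 0 < G x y) ∧ (∀ x y, G x y = G y x) ∧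
    ∀ x y z, (G x y)⁻¹ ≤ ENNReal.ofReal κ * ((G x z)⁻¹ + (G z y)⁻¹)

/-- The closed support of a measure. -/
def msupp (μ : Measure Ω) : Set Ω :=
  {x | ∀ U : Set Ω, IsOpen U → x ∈ U → 0 < μ U}

/-- The weak maximum principle with constant `b ≥ 1`. -/
def WMP (G : Ω → Ω → ℝ≥0∞) (b : ℝ) : Prop :=
  1 ≤ b ∧ ∀ μ : Measure Ω, IsLocallyFiniteMeasure μ →
    (∀ x ∈ msupp μ, pot G μ x ≤ 1) → ∀ x, pot G μ x ≤ ENNReal.ofReal b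

/-- Quasi-symmetry with constant `a ≥ 1`. -/
def QS (G : Ω → Ω → ℝ≥0∞) (a : ℝ) : Prop :=
  1 ≤ a ∧ ∀ x y, (ENNReal.ofReal a)⁻¹ * G y x ≤ G x y ∧ G x y ≤ ENNReal.ofReal a * G y x

/-- The `L^q` quasi-norm of a nonnegative function with respect to `σ`. -/
def lqNorm (q : ℝ) (σ : Measure Ω) (f : Ω → ℝ≥0∞) : ℝ≥0∞ :=
  (∫⁻ x, f x ^ q ∂σ) ^ (1 / q)

/-- The least constant `ϰ` in the `(1,q)` weighted norm inequality
`‖Gν‖_{L^q(σ)} ≤ C ‖ν‖` over all finite Radon measures `ν`. -/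
def kappa (G : Ω → Ω → ℝ≥0∞) (q : ℝ) (σ : Measure Ω) : ℝ≥0∞ :=
  sInf {C : ℝ≥0∞ | ∀ ν : Measure Ω, IsFiniteMeasure ν →
    lqNorm q σ (pot G ν) ≤ C * ν Set.univ}

/-- The ball `B(x,r) = {y : G(x,y) > 1/r}`, i.e. `{y : d(x,y) < r}` with `d = 1/G`. -/
def ball (G : Ω → Ω → ℝ≥0∞) (x : Ω) (r : ℝ) : Set Ω :=
  {y | (G x y)⁻¹ < ENNReal.ofReal r}

/-- The intrinsic nonlinear potential
`Kσ(x) = ∫_0^∞ ϰ(B(x,r))^{q/(1-q)} r⁻² dr`. -/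
def kpot (G : Ω → Ω → ℝ≥0∞) (q : ℝ) (σ : Measure Ω) (x : Ω) : ℝ≥0∞ :=
  ∫⁻ r in Set.Ioi (0 : ℝ),
    kappa G q (σ.restrict (ball G x r)) ^ (q / (1 - q)) / ENNReal.ofReal (r ^ 2)

/-- A nontrivial super-solution of `u = G(u^q dσ) + d`:
`u > 0` σ-a.e. and `G(u^q dσ) + d ≤ u < ∞` σ-a.e. -/
def IsSupSol (G : Ω → Ω → ℝ≥0∞) (σ : Measure Ω) (q : ℝ) (d : Ω → ℝ≥0∞)
    (u : Ω → ℝ≥0∞) : Prop :=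
  Measurable u ∧ (∀ᵐ x ∂σ, 0 < u x) ∧
    ∀ᵐ x ∂σ, potF G σ (fun y => u y ^ q) x + d x ≤ u x ∧ u x < ∞

/-- A sub-solution: `u ≤ G(u^q dσ) + d < ∞` σ-a.e. -/
def IsSubSol (G : Ω → Ω → ℝ≥0∞) (σ : Measure Ω) (q : ℝ) (d : Ω → ℝ≥0∞)
    (u : Ω → ℝ≥0∞) : Prop :=
  Measurable u ∧
    ∀ᵐ x ∂σ, u x ≤ potF G σ (fun y => u y ^ q) x + d x ∧
      potF G σ (fun y => u y ^ q) x + d x < ∞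

/-- A nontrivial solution: `u > 0` σ-a.e. and `u = G(u^q dσ) + d`, `u < ∞`, σ-a.e. -/
def IsSol (G : Ω → Ω → ℝ≥0∞) (σ : Measure Ω) (q : ℝ) (d : Ω → ℝ≥0∞)
    (u : Ω → ℝ≥0∞) : Prop :=
  Measurable u ∧ (∀ᵐ x ∂σ, 0 < u x) ∧
    ∀ᵐ x ∂σ, u x = potF G σ (fun y => u y ^ q) x + d x ∧ u x < ∞

/-- The growth conditions `∫_a^∞ σ(B(x₀,r)) r⁻² dr < ∞`,
`∫_a^∞ ϰ(B(x₀,r))^{q/(1-q)} r⁻² dr < ∞` and `∫_a^∞ μ(B(x₀,r)) r⁻² dr < ∞`. -/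
def growthConds (G : Ω → Ω → ℝ≥0∞) (q : ℝ) (σ μ : Measure Ω) (x₀ : Ω) (a : ℝ) : Prop :=
  (∫⁻ r in Set.Ioi a, σ (ball G x₀ r) / ENNReal.ofReal (r ^ 2)) < ∞ ∧
  (∫⁻ r in Set.Ioi a,
      kappa G q (σ.restrict (ball G x₀ r)) ^ (q / (1 - q)) / ENNReal.ofReal (r ^ 2)) < ∞ ∧
  (∫⁻ r in Set.Ioi a, μ (ball G x₀ r) / ENNReal.ofReal (r ^ 2)) < ∞

/-- The modified kernel `G̃(x,y) = G(x,y)/(m(x)m(y))`. -/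
def modKer (G : Ω → Ω → ℝ≥0∞) (m : Ω → ℝ) : Ω → Ω → ℝ≥0∞ :=
  fun x y => G x y / (ENNReal.ofReal (m x) * ENNReal.ofReal (m y))

/-- The modified measure `dσ̃ = m^{1+q} dσ`. -/
def modMeas (σ : Measure Ω) (m : Ω → ℝ) (q : ℝ) : Measure Ω :=
  σ.withDensity fun x => ENNReal.ofReal (m x) ^ ((1 : ℝ) + q)

end NPE

namespace NPE

def invSqMeasure : Measure ℝ :=
  (volume.restrict (Ioi 0)).withDensity fun r => (ENNReal.ofReal (r ^ 2))⁻¹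

instance : SFinite invSqMeasure := by
  unfold invSqMeasure
  infer_instance

lemma lintegral_invSqMeasure {f : ℝ → ℝ≥0∞} (hf : Measurable f) :
    ∫⁻ r, f r ∂invSqMeasure = ∫⁻ r in Ioi 0, f r / ENNReal.ofReal (r ^ 2) := by
  rw [invSqMeasure, lintegral_withDensity_eq_lintegral_mul _ (by fun_prop) hf]
  simp only [Pi.mul_apply, div_eq_mul_inv, mul_comm]

lemma invSqMeasure_Ioi {b : ℝ} (hb : 0 < b) : invSqMeasure (Ioi b) = ENNReal.ofReal b⁻¹ := by
  have hpow : ∀ r ∈ Ioi b, (ENNReal.ofReal (r ^ 2))⁻¹ = ENNReal.ofReal (r ^ (-2 : ℝ)) := by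
    intro r hr
    rw [Real.rpow_neg (hb.trans hr).le,
      ENNReal.ofReal_inv_of_pos (Real.rpow_pos_of_pos (hb.trans hr) 2)]
    norm_num [Real.rpow_natCast r 2]
  rw [invSqMeasure, withDensity_apply _ measurableSet_Ioi,
    Measure.restrict_restrict measurableSet_Ioi, Ioi_inter_Ioi, sup_eq_left.mpr hb.le,
    setLIntegral_congr_fun measurableSet_Ioi hpow,
    ← ofReal_integral_eq_lintegral_ofReal (integrableOn_Ioi_rpow_of_lt (by norm_num) hb)
      ((ae_restrict_mem measurableSet_Ioi).mono fun r hr =>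
        Real.rpow_nonneg (hb.trans hr).le _),
    integral_Ioi_rpow_of_lt (by norm_num) hb]
  norm_num [Real.rpow_neg_one]

lemma invSqMeasure_Ioi_zero : invSqMeasure (Ioi 0) = ∞ := by
  refine ENNReal.eq_top_of_forall_nnreal_le fun C => ?_
  have hb : (0 : ℝ) < ((C : ℝ) + 1)⁻¹ := by positivity
  calc (C : ℝ≥0∞) ≤ ENNReal.ofReal ((C : ℝ) + 1) := by
        rw [← ENNReal.ofReal_coe_nnreal]
        exact ENNReal.ofReal_le_ofReal (by linarith)
    _ = invSqMeasure (Ioi ((C : ℝ) + 1)⁻¹) := by rw [invSqMeasure_Ioi hb, inv_inv]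
    _ ≤ invSqMeasure (Ioi 0) := measure_mono fun r hr => hb.trans hr

lemma invSqMeasure_inv_lt_ofReal_mul {c : ℝ} (hc : 0 < c) (t : ℝ≥0∞) :
    invSqMeasure {r | t⁻¹ < ENNReal.ofReal (c * r)} = ENNReal.ofReal c * t := by
  rcases eq_or_ne t 0 with rfl | ht0
  · simp
  rcases eq_or_ne t ∞ with rfl | htop
  · have hset : {r : ℝ | (∞ : ℝ≥0∞)⁻¹ < ENNReal.ofReal (c * r)} = Ioi 0 := by
      ext r
      simp [mul_pos_iff_of_pos_left hc]
    rw [hset, invSqMeasure_Ioi_zero, ENNReal.mul_top (by simp [hc])]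
  have hti : t⁻¹ ≠ ∞ := by simp [ht0]
  have hset : {r : ℝ | t⁻¹ < ENNReal.ofReal (c * r)} = Ioi (t⁻¹.toReal / c) := by
    ext r
    rw [Set.mem_ofPred_eq, ENNReal.lt_ofReal_iff_toReal_lt hti, mem_Ioi, div_lt_iff₀ hc,
      mul_comm]
  have hb : (t⁻¹.toReal / c)⁻¹ = c * t.toReal := by
    rw [ENNReal.toReal_inv]
    field_simp
  rw [hset, invSqMeasure_Ioi (div_pos (ENNReal.toReal_pos (by simp [htop]) hti) hc), hb,
    ENNReal.ofReal_mul hc.le, ENNReal.ofReal_toReal htop]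

lemma lintegral_rpow_mul_rpow_le {α : Type*} [MeasurableSpace α] (μ : Measure α) {q : ℝ}
    (hq0 : 0 < q) (hq1 : q < 1) {f g : α → ℝ≥0∞} (hf : AEMeasurable f μ)
    (hg : AEMeasurable g μ) :
    ∫⁻ a, f a ^ q * g a ^ q ∂μ ≤
      (∫⁻ a, f a ^ (q / (1 - q)) ∂μ) ^ (1 - q) * (∫⁻ a, g a ∂μ) ^ q := by
  have hpq : Real.HolderConjugate (1 - q)⁻¹ q⁻¹ :=
    ⟨by rw [inv_inv, inv_inv, inv_one]; ring, inv_pos.mpr (by linarith), inv_pos.mpr hq0⟩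
  refine (ENNReal.lintegral_mul_le_Lp_mul_Lq μ hpq (hf.pow_const q) (hg.pow_const q)).trans_eq ?_
  simp only [← ENNReal.rpow_mul, inv_inv, div_eq_mul_inv, mul_inv_cancel₀ hq0.ne',
    ENNReal.rpow_one, one_mul]

variable {Ω : Type*}

def QuasiTriangle (G : Ω → Ω → ℝ≥0∞) (κ : ℝ) : Prop :=
  ∀ x y z, (G x y)⁻¹ ≤ ENNReal.ofReal κ * ((G x z)⁻¹ + (G z y)⁻¹)

lemma ball_mono {G : Ω → Ω → ℝ≥0∞} {x : Ω} {r r' : ℝ} (h : r ≤ r') :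
    ball G x r ⊆ ball G x r' :=
  fun _ hy => hy.trans_le (ENNReal.ofReal_le_ofReal h)

namespace QuasiTriangle

variable {G : Ω → Ω → ℝ≥0∞} {κ : ℝ} {x y z : Ω}

lemma inv_le (hG : QuasiTriangle G κ) {t : ℝ≥0∞} (hxy : (G x y)⁻¹ ≤ t) (hyz : (G y z)⁻¹ ≤ t) :
    (G x z)⁻¹ ≤ ENNReal.ofReal (2 * κ) * t := by
  calc (G x z)⁻¹ ≤ ENNReal.ofReal κ * ((G x y)⁻¹ + (G y z)⁻¹) := hG x z y
    _ ≤ ENNReal.ofReal κ * (t + t) := by gcongr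
    _ = ENNReal.ofReal (2 * κ) * t := by
      rw [ENNReal.ofReal_mul zero_le_two, ENNReal.ofReal_ofNat]
      ring

lemma le_mul_of_le (hG : QuasiTriangle G κ) (hκ : 0 < κ) (h : G y z ≤ G x y) :
    G y z ≤ ENNReal.ofReal (2 * κ) * G x z := by
  have hc : ENNReal.ofReal (2 * κ) ≠ 0 := by simpa using hκ
  have hinv := hG.inv_le (ENNReal.inv_le_inv.mpr h) le_rfl
  rwa [← inv_inv (ENNReal.ofReal (2 * κ)),
    ← ENNReal.mul_inv (Or.inl (ENNReal.inv_ne_zero.mpr ENNReal.ofReal_ne_top))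
      (Or.inl (ENNReal.inv_ne_top.mpr hc)), ENNReal.inv_le_inv,
    ENNReal.inv_mul_le_iff hc ENNReal.ofReal_ne_top] at hinv

lemma mem_ball (hG : QuasiTriangle G κ) (hκ : 0 < κ) {r : ℝ} (hy : y ∈ ball G x r)
    (h : G x y < G y z) : z ∈ ball G x (2 * κ * r) := by
  have hc : ENNReal.ofReal (2 * κ) ≠ 0 := by simpa using hκ
  calc (G x z)⁻¹ ≤ ENNReal.ofReal (2 * κ) * (G x y)⁻¹ :=
        hG.inv_le le_rfl (ENNReal.inv_le_inv.mpr h.le)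
    _ < ENNReal.ofReal (2 * κ) * ENNReal.ofReal r :=
        ENNReal.mul_lt_mul_right hc ENNReal.ofReal_ne_top hy
    _ = ENNReal.ofReal (2 * κ * r) := (ENNReal.ofReal_mul (by positivity)).symm

end QuasiTriangle

variable [MeasurableSpace Ω]

section Potential

variable {G : Ω → Ω → ℝ≥0∞} {x : Ω}

lemma measurableSet_ball (hGx : Measurable (G x)) (r : ℝ) : MeasurableSet (ball G x r) :=
  measurableSet_lt hGx.inv measurable_const

lemma measure_ball_le_mul_pot (hGx : Measurable (G x)) (μ : Measure Ω) (R : ℝ) :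
    μ (ball G x R) ≤ ENNReal.ofReal R * pot G μ x := by
  rcases le_or_gt R 0 with hR | hR
  · have : ball G x R = ∅ := by
      ext y
      simp [ball, ENNReal.ofReal_of_nonpos hR]
    simp [this]
  have hR0 : ENNReal.ofReal R ≠ 0 := (ENNReal.ofReal_pos.mpr hR).ne'
  have hsub : ball G x R ⊆ {z | (ENNReal.ofReal R)⁻¹ ≤ G x z} := fun z hz =>
    ENNReal.inv_le_iff_inv_le.mp hz.le
  rw [← ENNReal.inv_mul_le_iff hR0 ENNReal.ofReal_ne_top]
  exact (mul_le_mul_right (measure_mono hsub) _).trans (mul_meas_ge_le_lintegral hGx _)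

lemma lintegral_setLIntegral_ball_invSqMeasure (hGx : Measurable (G x)) {c : ℝ} (hc : 0 < c)
    (μ : Measure Ω) [SFinite μ] {f : Ω → ℝ≥0∞} (hf : Measurable f) :
    ∫⁻ r, ∫⁻ y in ball G x (c * r), f y ∂μ ∂invSqMeasure =
      ENNReal.ofReal c * ∫⁻ y, G x y * f y ∂μ := by
  have hS : MeasurableSet {p : ℝ × Ω | (G x p.2)⁻¹ < ENNReal.ofReal (c * p.1)} :=
    measurableSet_lt (hGx.comp measurable_snd).inv (by fun_prop)
  calc ∫⁻ r, ∫⁻ y in ball G x (c * r), f y ∂μ ∂invSqMeasure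
      = ∫⁻ r, ∫⁻ y, {p : ℝ × Ω | (G x p.2)⁻¹ < ENNReal.ofReal (c * p.1)}.indicator
          (fun p => f p.2) (r, y) ∂μ ∂invSqMeasure := by
        refine lintegral_congr fun r => ?_
        rw [← lintegral_indicator (measurableSet_ball hGx _)]
        rfl
    _ = ∫⁻ y, ∫⁻ r, {p : ℝ × Ω | (G x p.2)⁻¹ < ENNReal.ofReal (c * p.1)}.indicator
          (fun p => f p.2) (r, y) ∂invSqMeasure ∂μ :=
        lintegral_lintegral_swap ((hf.comp measurable_snd).indicator hS).aemeasurable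
    _ = ∫⁻ y, ENNReal.ofReal c * G x y * f y ∂μ := by
        refine lintegral_congr fun y => ?_
        rw [← invSqMeasure_inv_lt_ofReal_mul hc, mul_comm (invSqMeasure _),
          ← lintegral_indicator_const (measurableSet_lt measurable_const (by fun_prop))]
        rfl
    _ = ENNReal.ofReal c * ∫⁻ y, G x y * f y ∂μ := by
        simp_rw [mul_assoc]
        exact lintegral_const_mul _ (hGx.mul hf)

lemma lintegral_measure_ball_invSqMeasure (hGx : Measurable (G x)) {c : ℝ} (hc : 0 < c)
    (μ : Measure Ω) [SFinite μ] :
    ∫⁻ r, μ (ball G x (c * r)) ∂invSqMeasure = ENNReal.ofReal c * pot G μ x := by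
  simpa [pot] using lintegral_setLIntegral_ball_invSqMeasure hGx hc μ measurable_one

lemma pot_ne_zero (hGx : Measurable (G x)) (hGpos : ∀ y, 0 < G x y) {σ : Measure Ω}
    (hσ : σ ≠ 0) : pot G σ x ≠ 0 := by
  rw [pot, Ne, lintegral_eq_zero_iff hGx, Filter.EventuallyEq, ae_iff]
  simpa [(hGpos _).ne'] using hσ

end Potential

lemma lqNorm_pot_le_kappa_mul {G : Ω → Ω → ℝ≥0∞} {q : ℝ} (hq : 0 < q) (σ ν : Measure Ω)
    [IsFiniteMeasure ν] : lqNorm q σ (pot G ν) ≤ kappa G q σ * ν univ := by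
  rcases eq_or_ne (ν univ) 0 with h0 | h0
  · rw [Measure.measure_univ_eq_zero.mp h0]
    simp [lqNorm, pot, hq, ENNReal.zero_rpow_of_pos]
  rw [← ENNReal.div_le_iff_le_mul (Or.inl h0) (Or.inl (measure_ne_top _ _))]
  refine le_sInf fun C hC => ?_
  rw [ENNReal.div_le_iff_le_mul (Or.inl h0) (Or.inl (measure_ne_top _ _))]
  exact hC ν inferInstance

lemma kappa_mono (G : Ω → Ω → ℝ≥0∞) {q : ℝ} (hq : 0 < q) {σ σ' : Measure Ω} (h : σ ≤ σ') :
    kappa G q σ ≤ kappa G q σ' :=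
  sInf_le_sInf fun _ hC ν hν => le_trans
    (ENNReal.rpow_le_rpow (lintegral_mono' h le_rfl) (by positivity)) (hC ν hν)

lemma kpot_eq_lintegral_invSqMeasure (G : Ω → Ω → ℝ≥0∞) {q : ℝ} (hq : 0 < q)
    (σ : Measure Ω) (x : Ω) :
    kpot G q σ x = ∫⁻ r, kappa G q (σ.restrict (ball G x r)) ^ (q / (1 - q)) ∂invSqMeasure := by
  have hmono : Monotone fun r => kappa G q (σ.restrict (ball G x r)) := fun _ _ h =>
    kappa_mono G hq (Measure.restrict_mono (ball_mono h) le_rfl)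
  rw [lintegral_invSqMeasure (hmono.measurable.pow_const _), kpot]

/-- The part of `Gν(y)` carried by the points `z` with `G(y,z) > G(x,y)`, i.e. closer to `y`
than `x` is. -/
def nearPot (G : Ω → Ω → ℝ≥0∞) (ν : Measure Ω) (x y : Ω) : ℝ≥0∞ :=
  ∫⁻ z in {z | G x y < G y z}, G y z ∂ν

lemma measurable_nearPot {G : Ω → Ω → ℝ≥0∞} (hG : Measurable (Function.uncurry G))
    (ν : Measure Ω) [SFinite ν] (x : Ω) : Measurable (nearPot G ν x) := by
  have hGy (y : Ω) : Measurable (G y) := hG.comp measurable_prodMk_left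
  have hS : MeasurableSet {p : Ω × Ω | G x p.1 < Function.uncurry G p} :=
    measurableSet_lt ((hGy x).comp measurable_fst) hG
  have hnear : nearPot G ν x = fun y =>
      ∫⁻ z, {p : Ω × Ω | G x p.1 < Function.uncurry G p}.indicator (Function.uncurry G) (y, z) ∂ν :=
    funext fun y => by
      rw [nearPot, ← lintegral_indicator (measurableSet_lt measurable_const (hGy y))]
      rfl
  rw [hnear]
  exact (hG.indicator hS).lintegral_prod_right'

namespace QuasiTriangle

variable {G : Ω → Ω → ℝ≥0∞} {κ : ℝ} {x y : Ω}

/-- Away from the near part, `G(y,z) ≤ 2κ G(x,z)`. -/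
lemma pot_le_nearPot_add (hG : QuasiTriangle G κ) (hκ : 0 < κ) (hGy : Measurable (G y))
    (ν : Measure Ω) : pot G ν y ≤ nearPot G ν x y + ENNReal.ofReal (2 * κ) * pot G ν x := by
  have hS : MeasurableSet {z | G x y < G y z} := measurableSet_lt measurable_const hGy
  rw [pot, ← lintegral_add_compl _ hS, nearPot]
  gcongr
  calc ∫⁻ z in {z | G x y < G y z}ᶜ, G y z ∂ν
      ≤ ∫⁻ z in {z | G x y < G y z}ᶜ, ENNReal.ofReal (2 * κ) * G x z ∂ν :=
        setLIntegral_mono' hS.compl fun z hz => hG.le_mul_of_le hκ (not_lt.mp hz)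
    _ ≤ ∫⁻ z, ENNReal.ofReal (2 * κ) * G x z ∂ν := lintegral_mono' Measure.restrict_le_self le_rfl
    _ = ENNReal.ofReal (2 * κ) * pot G ν x := lintegral_const_mul' _ _ ENNReal.ofReal_ne_top

lemma setLIntegral_nearPot_rpow_le (hG : QuasiTriangle G κ) (hκ : 0 < κ)
    (hGx : Measurable (G x)) {q : ℝ} (hq : 0 < q) (σ ν : Measure Ω) {r : ℝ}
    (hν : ν (ball G x (2 * κ * r)) ≠ ∞) :
    ∫⁻ y in ball G x r, nearPot G ν x y ^ q ∂σ ≤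
      kappa G q (σ.restrict (ball G x r)) ^ q * ν (ball G x (2 * κ * r)) ^ q := by
  have : IsFiniteMeasure (ν.restrict (ball G x (2 * κ * r))) :=
    ⟨by rwa [Measure.restrict_apply_univ, lt_top_iff_ne_top]⟩
  calc ∫⁻ y in ball G x r, nearPot G ν x y ^ q ∂σ
      ≤ ∫⁻ y in ball G x r, pot G (ν.restrict (ball G x (2 * κ * r))) y ^ q ∂σ :=
        setLIntegral_mono' (measurableSet_ball hGx r) fun y hy => ENNReal.rpow_le_rpow
          (lintegral_mono_set fun _ hz => hG.mem_ball hκ hy hz) hq.le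
    _ = lqNorm q (σ.restrict (ball G x r)) (pot G (ν.restrict (ball G x (2 * κ * r)))) ^ q := by
        rw [lqNorm, ← ENNReal.rpow_mul, one_div, inv_mul_cancel₀ hq.ne', ENNReal.rpow_one]
    _ ≤ (kappa G q (σ.restrict (ball G x r)) * ν (ball G x (2 * κ * r))) ^ q := by
        rw [← Measure.restrict_apply_univ]
        exact ENNReal.rpow_le_rpow (lqNorm_pot_le_kappa_mul hq _ _) hq.le
    _ = _ := ENNReal.mul_rpow_of_nonneg _ _ hq.le

lemma potF_rpow_pot_le (hG : QuasiTriangle G κ) (hκ : 0 < κ)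
    (hGm : Measurable (Function.uncurry G)) {q : ℝ} (hq0 : 0 < q) (hq1 : q < 1)
    (σ ν : Measure Ω) :
    potF G σ (fun y => pot G ν y ^ q) x ≤
      ∫⁻ y, G x y * nearPot G ν x y ^ q ∂σ +
        pot G σ x * (ENNReal.ofReal (2 * κ) * pot G ν x) ^ q := by
  have hGx : Measurable (G x) := hGm.comp measurable_prodMk_left
  calc potF G σ (fun y => pot G ν y ^ q) x
      ≤ ∫⁻ y, G x y * nearPot G ν x y ^ q +
          G x y * (ENNReal.ofReal (2 * κ) * pot G ν x) ^ q ∂σ := by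
        refine lintegral_mono fun y => ?_
        rw [← mul_add]
        gcongr
        exact (ENNReal.rpow_le_rpow (hG.pot_le_nearPot_add hκ
          (hGm.comp measurable_prodMk_left) ν) hq0.le).trans
            (ENNReal.rpow_add_le_add_rpow _ _ hq0.le hq1.le)
    _ = _ := by
        rw [lintegral_add_right _ (hGx.mul_const _), lintegral_mul_const _ hGx]
        rfl

lemma potF_rpow_pot_le_mul (hG : QuasiTriangle G κ) (hκ : 0 < κ)
    (hGm : Measurable (Function.uncurry G)) {q : ℝ} (hq0 : 0 < q) (hq1 : q < 1)
    (σ ν : Measure Ω) [SFinite σ] [SFinite ν] (ha : pot G ν x ≠ ∞) :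
    potF G σ (fun y => pot G ν y ^ q) x ≤
      (ENNReal.ofReal (2 * κ) * pot G ν x) ^ q * (pot G σ x + kpot G q σ x ^ (1 - q)) := by
  have hGx : Measurable (G x) := hGm.comp measurable_prodMk_left
  have hK : Monotone fun r => kappa G q (σ.restrict (ball G x r)) := fun _ _ h =>
    kappa_mono G hq0 (Measure.restrict_mono (ball_mono h) le_rfl)
  have hN : Monotone fun r => ν (ball G x (2 * κ * r)) := fun _ _ h =>
    measure_mono (ball_mono (by gcongr))
  calc potF G σ (fun y => pot G ν y ^ q) x
      ≤ ∫⁻ y, G x y * nearPot G ν x y ^ q ∂σ +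
          pot G σ x * (ENNReal.ofReal (2 * κ) * pot G ν x) ^ q :=
        hG.potF_rpow_pot_le hκ hGm hq0 hq1 σ ν
    _ = ∫⁻ r, ∫⁻ y in ball G x (1 * r), nearPot G ν x y ^ q ∂σ ∂invSqMeasure +
          pot G σ x * (ENNReal.ofReal (2 * κ) * pot G ν x) ^ q := by
        rw [lintegral_setLIntegral_ball_invSqMeasure hGx one_pos σ
          ((measurable_nearPot hGm ν x).pow_const q), ENNReal.ofReal_one, one_mul]
    _ ≤ ∫⁻ r, kappa G q (σ.restrict (ball G x r)) ^ q * ν (ball G x (2 * κ * r)) ^ q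
          ∂invSqMeasure + pot G σ x * (ENNReal.ofReal (2 * κ) * pot G ν x) ^ q := by
        gcongr with r
        rw [one_mul]
        exact hG.setLIntegral_nearPot_rpow_le hκ hGx hq0 σ ν (ne_top_of_le_ne_top
          (ENNReal.mul_ne_top ENNReal.ofReal_ne_top ha) (measure_ball_le_mul_pot hGx ν _))
    _ ≤ kpot G q σ x ^ (1 - q) * (∫⁻ r, ν (ball G x (2 * κ * r)) ∂invSqMeasure) ^ q +
          pot G σ x * (ENNReal.ofReal (2 * κ) * pot G ν x) ^ q := by
        rw [kpot_eq_lintegral_invSqMeasure G hq0]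
        gcongr
        exact lintegral_rpow_mul_rpow_le _ hq0 hq1 hK.measurable.aemeasurable
          hN.measurable.aemeasurable
    _ = _ := by
        rw [lintegral_measure_ball_invSqMeasure hGx (by positivity) ν]
        ring

end QuasiTriangle

end NPE

namespace NPE

variable {Ω : Type*} [TopologicalSpace Ω] [MeasurableSpace Ω]

theorem statement12_general [SecondCountableTopology Ω]
    [BorelSpace Ω] (G : Ω → Ω → ℝ≥0∞) (κ q : ℝ) (hq0 : 0 < q) (hq1 : q < 1)
    (ν σ : Measure Ω) [IsLocallyFiniteMeasure ν] [IsLocallyFiniteMeasure σ]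
    (hG : IsQuasiMetricKernel G κ) :
    ∀ x : Ω, potF G σ (fun y => pot G ν y ^ q) x ≤
      ENNReal.ofReal ((2 * κ) ^ q) * pot G ν x ^ q *
        (pot G σ x + kpot G q σ x ^ (1 - q)) := by
  obtain ⟨hGk, hκ, hGpos, -, htri⟩ := hG
  have hκ0 : 0 < κ := by linarith
  have hGm : Measurable (Function.uncurry G) := hGk.measurable
  intro x
  rw [← ENNReal.ofReal_rpow_of_pos (by positivity), ← ENNReal.mul_rpow_of_nonneg _ _ hq0.le]
  rcases ne_or_eq (pot G ν x) ∞ with ha | ha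
  · exact QuasiTriangle.potF_rpow_pot_le_mul htri hκ0 hGm hq0 hq1 σ ν ha
  rcases eq_or_ne σ 0 with rfl | hσ
  · simp [potF]
  have hσx := pot_ne_zero (hGm.comp measurable_prodMk_left) (hGpos x) hσ
  rw [ha, ENNReal.mul_top (by simpa using hκ0), ENNReal.top_rpow_of_pos hq0,
    ENNReal.top_mul (by simp [hσx])]
  exact le_top

/-- the key estimate
`G[(Gν)^q dσ](x) ≤ (2κ)^q (Gν(x))^q [Gσ(x) + (Kσ(x))^{1-q}]` for quasi-metric kernels. -/
theorem statement12 [LocallyCompactSpace Ω] [T2Space Ω] [SecondCountableTopology Ω]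
    [BorelSpace Ω] (G : Ω → Ω → ℝ≥0∞) (κ q : ℝ) (hq0 : 0 < q) (hq1 : q < 1)
    (ν σ : Measure Ω) [IsLocallyFiniteMeasure ν] [IsLocallyFiniteMeasure σ]
    (hG : IsQuasiMetricKernel G κ) :
    ∀ x : Ω, potF G σ (fun y => pot G ν y ^ q) x ≤
      ENNReal.ofReal ((2 * κ) ^ q) * pot G ν x ^ q *
        (pot G σ x + kpot G q σ x ^ (1 - q)) :=
  statement12_general G κ q hq0 hq1 ν σ hG

end NPE
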